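/- arXiv:1501.00787 — 3 statements merged into one kernel-verified Lean document; each statement's English description precedes it below -/
import Mathlib

section
/- Let R be a ring satisfying the identity [[x,y],z] = 0 for all x,y,z ∈ R. If a₀, a₁, …, a_k ∈ R satisfy a₀a₁⋯a_k = 0, then a₁x₁a₁y₁ · a₂x₂a₂y₂ ⋯ a_k x_k a_k y_k · a₀ = 0 for all x₁,y₁,…,x_k,y_k ∈ R. -/
lemma key_lemma {R : Type*} [Ring R]
    (hL2 : ∀ x y z : R, (x * y - y * x) * z - z * (x * y - y * x) = 0)
    (a b : R) (hab : a * b = 0) (x y : R) : b * x * b * y * a = 0 := by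
  have hGL : ∀ p q r s : R,
      (p*s - s*p)*(r*q - q*r) + (p*q - q*p)*(r*s - s*r) = 0 := by
    intro p q r s
    linear_combination (norm := noncomm_ring) hL2 (p*r) q s - p * hL2 r q s - hL2 p q s * r
  have M : ∀ r : R, (a*r - r*a)*b = (r*b - b*r)*a := by
    intro r
    linear_combination (norm := noncomm_ring) hab * r - r * hab - hL2 r b a
  have hbab : b*a*b = 0 := by
    linear_combination (norm := noncomm_ring) hab * b - M b
  have hA : b*x*b*a*y = 0 := by
    linear_combination (norm := noncomm_ring)
      hbab * (x*y) - hab*(b*x*y) + b*x*hab*y - hL2 b a (b*x) * y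
  have hB1 : (y*a - a*y)*b*b*x = 0 := by
    linear_combination (norm := noncomm_ring) (b*y - y*b) * hab * x - M y * (b*x)
  have hB2 : (y*a - a*y)*((x*b - b*x)*b) = 0 := by
    linear_combination (norm := noncomm_ring)
      (hGL x b b y) * a - (x*b - b*x) * M y - hL2 x b (y*a - a*y) * b
  linear_combination (norm := noncomm_ring)
    hA + hB1 + hB2 - hL2 y a (b*x*b) - (y*a - a*y) * hL2 x b b

theorem lie_nilpotent_two_prod_eq_zero {R : Type*} [Ring R]
    (hL2 : ∀ x y z : R, (x * y - y * x) * z - z * (x * y - y * x) = 0)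
    (k : ℕ) (a x y : ℕ → R)
    (h : ((List.range (k + 1)).map a).prod = 0) :
    ((List.range k).map (fun i => a (i + 1) * x (i + 1) * a (i + 1) * y (i + 1))).prod * a 0
      = 0 := by
  induction k generalizing a with
  | zero =>
    rw [List.range_succ] at h
    simp only [List.range_zero, List.map_append, List.map_cons, List.map_nil,
      List.prod_append, List.prod_cons, List.prod_nil, mul_one, one_mul] at h
    simp [h]
  | succ n ih =>
    rw [List.range_succ, List.map_append, List.prod_append] at h
    simp only [List.map_cons, List.map_nil, List.prod_cons, List.prod_nil, mul_one] at h
    have hkey := key_lemma hL2 _ _ h (x (n+1)) (y (n+1))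
    set f := a (n+1) * x (n+1) * a (n+1) * y (n+1) with hf
    set a' : ℕ → R := fun i => if i = 0 then f * a 0 else a i with ha'
    have e1 : a' 0 = f * a 0 := by simp [ha']
    have h' : ((List.range (n + 1)).map a').prod = 0 := by
      rw [List.range_succ_eq_map, List.map_cons, List.prod_cons, List.map_map] at hkey ⊢
      have e2 : (List.map (a' ∘ Nat.succ) (List.range n)) =
          (List.map (a ∘ Nat.succ) (List.range n)) := by
        apply List.map_congr_left
        intro i _
        simp [ha']
      rw [e1, e2, mul_assoc]
      exact hkey
    have hih := ih a' h'
    have e4 : (List.range n).map (fun i => a' (i+1) * x (i+1) * a' (i+1) * y (i+1)) =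
        (List.range n).map (fun i => a (i+1) * x (i+1) * a (i+1) * y (i+1)) := by
      apply List.map_congr_left
      intro i _
      simp [ha']
    rw [e1, e4] at hih
    rw [List.range_succ, List.map_append, List.prod_append]
    simp only [List.map_cons, List.map_nil, List.prod_cons, List.prod_nil, mul_one]
    rw [mul_assoc]
    exact hih
end

section
/- Let n ≥ 3 and R a ring Lie nilpotent of index n. Then the two-sided ideal N of R generated by all left-normed commutators [x₁,…,x_n]* of length n satisfies N² = {0}. -/
/-- Left-normed commutator: `lnc x [x₂,…,x_k] = [x, x₂, …, x_k]*`. -/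
def lnc {R : Type*} [Ring R] (x : R) (l : List R) : R :=
  l.foldl (fun a y => a * y - y * a) x

lemma lnc_append {R : Type*} [Ring R] (x : R) (l₁ l₂ : List R) :
    lnc x (l₁ ++ l₂) = lnc (lnc x l₁) l₂ := by
  simp [lnc, List.foldl_append]

lemma lnc_pair {R : Type*} [Ring R] (x b c : R) :
    lnc x [b, c] = (x*b - b*x)*c - c*(x*b - b*x) := rfl

lemma lnc_single {R : Type*} [Ring R] (x b : R) :
    lnc x [b] = x*b - b*x := rfl

/-- Key lemma (V): if all `[d,z]` are central, then `[a,z][d,y] = -[d,z][a,y]`. -/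
lemma keyV {R : Type*} [Ring R] (d : R)
    (Hd : ∀ z r : R, (d*z - z*d)*r = r*(d*z - z*d)) (y a z : R) :
    (a*z - z*a)*(d*y - y*d) = -((d*z - z*d)*(a*y - y*a)) := by
  have e : (a*z - z*a)*(d*y - y*d) + (d*z - z*d)*(a*y - y*a)
      = (a*(d*(z*y) - (z*y)*d) - (d*(z*y) - (z*y)*d)*a)
        - z*(a*(d*y - y*d) - (d*y - y*d)*a)
        - (a*(d*z - z*d) - (d*z - z*d)*a)*y := by noncomm_ring
  rw [← Hd (z*y) a, ← Hd y a, ← Hd z a] at e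
  simp only [sub_self, mul_zero, zero_mul, sub_zero, zero_sub, neg_zero] at e
  exact eq_neg_of_add_eq_zero_left e

/-- Key lemma (K): any triple commutator annihilates `[d,y]` when all `[d, z]` are central. -/
lemma keyK {R : Type*} [Ring R] (d : R)
    (Hd : ∀ z r : R, (d*z - z*d)*r = r*(d*z - z*d)) (y a b c : R) :
    ((a*b - b*a)*c - c*(a*b - b*a)) * (d*y - y*d) = 0 := by
  set v : R := d*y - y*d with hv
  -- [d, [b,c]] = 0
  have hdcomm : ∀ b c : R, d*(b*c - c*b) - (b*c - c*b)*d = 0 := by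
    intro b c
    have e : d*(b*c - c*b) - (b*c - c*b)*d
        = ((d*b - b*d)*c - c*(d*b - b*d)) - ((d*c - c*d)*b - b*(d*c - c*d)) := by noncomm_ring
    rw [Hd b c, Hd c b] at e
    simpa using e
  -- symmetry of K(a,b,c) in (b,c)
  have sym23 : ∀ a b c : R,
      ((a*b - b*a)*c - c*(a*b - b*a)) * v = ((a*c - c*a)*b - b*(a*c - c*a)) * v := by
    intro a b c
    have j : ((a*b - b*a)*c - c*(a*b - b*a)) * v - ((a*c - c*a)*b - b*(a*c - c*a)) * v
        = (a*(b*c - c*b) - (b*c - c*b)*a) * v := by noncomm_ring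
    have k := keyV d Hd y a (b*c - c*b)
    rw [hdcomm b c] at k
    simp only [zero_mul, neg_zero] at k
    rw [← hv] at k
    rw [k] at j
    exact sub_eq_zero.mp j
  -- antisymmetry in (a,b)
  have anti12 : ∀ a b c : R,
      ((a*b - b*a)*c - c*(a*b - b*a)) * v = -(((b*a - a*b)*c - c*(b*a - a*b)) * v) := by
    intro a b c; noncomm_ring
  have jac : ((a*b - b*a)*c - c*(a*b - b*a)) * v + ((b*c - c*b)*a - a*(b*c - c*b)) * v
      + ((c*a - a*c)*b - b*(c*a - a*c)) * v = 0 := by noncomm_ring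
  set K : R := ((a*b - b*a)*c - c*(a*b - b*a)) * v with hK
  -- K(b,c,a) = K
  have e1 : ((b*c - c*b)*a - a*(b*c - c*b)) * v = K := by
    rw [anti12 b c a, sym23 c b a, anti12 c a b, sym23 a c b, hK]
    simp
  -- K(c,a,b) = -K
  have e2 : ((c*a - a*c)*b - b*(c*a - a*c)) * v = -K := by
    rw [anti12 c a b, sym23 a c b, hK]
  rw [e1, e2] at jac
  have : K + K + -K = K := by abel
  rw [this] at jac
  exact jac

theorem ideal_of_lnc_squared_zero {R : Type*} [Ring R] (n : ℕ) (hn : 3 ≤ n)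
    (hLn : ∀ (x : R) (l : List R), l.length = n → lnc x l = 0)
    (N : TwoSidedIdeal R)
    (hN : N = TwoSidedIdeal.span {z : R | ∃ (x : R) (l : List R), l.length = n - 1 ∧ z = lnc x l}) :
    ∀ a ∈ N, ∀ b ∈ N, a * b = 0 := by
  set S : Set R := {z : R | ∃ (x : R) (l : List R), l.length = n - 1 ∧ z = lnc x l} with hS
  -- every generator is central
  have central : ∀ v ∈ S, ∀ r : R, v * r = r * v := by
    rintro v ⟨x, l, hl, rfl⟩ r
    have h0 : lnc x (l ++ [r]) = 0 := hLn x _ (by simp [hl]; omega)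
    rw [lnc_append, lnc_single] at h0
    exact sub_eq_zero.mp h0
  -- generators annihilate each other
  have gen_mul_gen : ∀ u ∈ S, ∀ v ∈ S, u * v = 0 := by
    rintro u ⟨x, l, hl, rfl⟩ v ⟨x', m, hm, rfl⟩
    -- decompose m = m.dropLast ++ [y]
    have hmne : m ≠ [] := by intro h; rw [h] at hm; simp at hm; omega
    obtain ⟨y, hym⟩ : ∃ y, m = m.dropLast ++ [y] :=
      ⟨m.getLast hmne, (List.dropLast_append_getLast hmne).symm⟩
    set d : R := lnc x' m.dropLast with hd
    have hdl : m.dropLast.length = n - 2 := by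
      have := List.length_dropLast (xs := m); omega
    have Hd : ∀ z r : R, (d*z - z*d)*r = r*(d*z - z*d) := by
      intro z r
      have h0 : lnc x' (m.dropLast ++ [z, r]) = 0 := by
        apply hLn; simp [hdl]; omega
      rw [lnc_append, lnc_pair] at h0
      rw [← hd] at h0
      exact sub_eq_zero.mp h0
    have hv : lnc x' m = d*y - y*d := by
      conv_lhs => rw [hym]
      rw [lnc_append, lnc_single, hd]
    -- decompose l = l₂ ++ [b, c]
    have hlne : l ≠ [] := by intro h; rw [h] at hl; simp at hl; omega
    obtain ⟨c, hcl⟩ : ∃ c, l = l.dropLast ++ [c] :=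
      ⟨l.getLast hlne, (List.dropLast_append_getLast hlne).symm⟩
    have hl1 : l.dropLast.length = n - 2 := by
      have := List.length_dropLast (xs := l); omega
    have hl1ne : l.dropLast ≠ [] := by
      intro h; rw [h] at hl1; simp at hl1; omega
    obtain ⟨b, hbl⟩ : ∃ b, l.dropLast = l.dropLast.dropLast ++ [b] :=
      ⟨l.dropLast.getLast hl1ne, (List.dropLast_append_getLast hl1ne).symm⟩
    set a : R := lnc x l.dropLast.dropLast with ha
    have hu : lnc x l = (a*b - b*a)*c - c*(a*b - b*a) := by
      conv_lhs => rw [hcl, hbl]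
      rw [List.append_assoc, lnc_append]
      rfl
    rw [hu, hv]
    exact keyK d Hd y a b c
  subst hN
  -- first step: N * S = 0
  have hNJ1 : ∀ a ∈ TwoSidedIdeal.span S, ∀ v ∈ S, a * v = 0 := by
    intro a ha
    have h := TwoSidedIdeal.mem_span_iff.mp ha
      (TwoSidedIdeal.mk' {a : R | ∀ v ∈ S, a * v = 0}
        (by intro v hv; simp)
        (by intro a b ha hb v hv; rw [add_mul, ha v hv, hb v hv, add_zero])
        (by intro a ha v hv; rw [neg_mul, ha v hv, neg_zero])
        (by intro x a ha v hv; rw [mul_assoc, ha v hv, mul_zero])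
        (by intro a x ha v hv
            rw [mul_assoc, ← central v hv x, ← mul_assoc, ha v hv, zero_mul]))
      (by intro u hu
          simp only [TwoSidedIdeal.coe_mk', Set.mem_setOf_eq]
          exact fun v hv => gen_mul_gen u hu v hv)
    rw [TwoSidedIdeal.mem_mk'] at h
    exact h
  -- second step: N * N = 0
  intro a ha b hb
  have h := TwoSidedIdeal.mem_span_iff.mp hb
    (TwoSidedIdeal.mk' {b : R | ∀ a ∈ TwoSidedIdeal.span S, a * b = 0}
      (by intro a ha; simp)
      (by intro b c hb hc a ha; rw [mul_add, hb a ha, hc a ha, add_zero])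
      (by intro b hb a ha; rw [mul_neg, hb a ha, neg_zero])
      (by intro x b hb a ha; rw [← mul_assoc]
          exact hb _ (TwoSidedIdeal.mul_mem_right _ a x ha))
      (by intro b x hb a ha; rw [← mul_assoc, hb a ha, zero_mul]))
    (by intro v hv
        simp only [TwoSidedIdeal.coe_mk', Set.mem_setOf_eq]
        exact fun a ha => hNJ1 a ha v hv)
  rw [TwoSidedIdeal.mem_mk'] at h
  exact h a ha
end

section
/- Let R be a ring Lie nilpotent of index n ≥ 2. Then the prime radical of R equals the set of nilpotent elements of R: rad(R) = {u ∈ R : u^k = 0 for some k ≥ 1}. -/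
section PrimeRing
variable {Q : Type*} [Ring Q]

/-- In a prime ring, if all commutators `[a,z]` are central then `a` is central. -/
lemma central_of_comm_central
    (hp : ∀ a b : Q, (∀ r : Q, a * r * b = 0) → a = 0 ∨ b = 0)
    (a : Q) (hc : ∀ z w : Q, (a * z - z * a) * w = w * (a * z - z * a)) :
    ∀ x : Q, a * x - x * a = 0 := by
  have key1 : ∀ x y : Q, (a * x - x * a) * (x * y - y * x) = 0 := by
    intro x y
    have e0 := hc (x * y) x
    have e1 := hc y x
    have e2 := hc x x
    have comb : (a * x - x * a) * (x * y - y * x)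
        = ((a * x - x * a) * x - x * (a * x - x * a)) * y
          - ((a * (x * y) - x * y * a) * x - x * (a * (x * y) - x * y * a))
          + x * ((a * y - y * a) * x - x * (a * y - y * a)) := by noncomm_ring
    rw [comb, e0, e1, e2]
    noncomm_ring
  have key2 : ∀ x : Q, (a * x - x * a) * (a * x - x * a) = 0 := by
    intro x
    have e := key1 x (a * 1)
    have i : (a * x - x * a) * (a * x - x * a)
        = (a * x - x * a) * a * (x * 1 - 1 * x)
          - (a * x - x * a) * (x * (a * 1) - a * 1 * x) := by noncomm_ring
    rw [i, e]
    noncomm_ring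
  intro x
  rcases hp (a * x - x * a) (a * x - x * a) (fun r => by
      rw [hc x r, mul_assoc, key2 x, mul_zero]) with h | h <;> exact h

/-- A prime Lie nilpotent ring is commutative. -/
lemma comm_of_prime_lnc
    (hp : ∀ a b : Q, (∀ r : Q, a * r * b = 0) → a = 0 ∨ b = 0) :
    ∀ n : ℕ, 1 ≤ n → (∀ (x : Q) (l : List Q), l.length = n → lnc x l = 0) →
      ∀ x y : Q, x * y - y * x = 0 := by
  intro n hn
  induction n, hn using Nat.le_induction with
  | base =>
    intro hL x y
    have := hL x [y] rfl
    simpa [lnc] using this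
  | succ n hn ih =>
    intro hL
    apply ih
    intro x l hl
    rcases l.eq_nil_or_concat with rfl | ⟨l', y, rfl⟩
    · simp at hl; omega
    have hc : ∀ z w : Q, (lnc x l' * z - z * lnc x l') * w
        = w * (lnc x l' * z - z * lnc x l') := by
      intro z w
      have := hL x (l' ++ [z, w]) (by
        simp only [List.length_append, List.length_concat] at hl ⊢
        simpa using hl)
      simp only [lnc, List.foldl_append, List.foldl_cons, List.foldl_nil] at this ⊢
      exact sub_eq_zero.mp this
    have := central_of_comm_central hp (lnc x l') hc y
    simpa [lnc, List.concat_eq_append, List.foldl_append] using this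

/-- A commutative prime ring is reduced. -/
lemma reduced_of_prime_comm
    (hp : ∀ a b : Q, (∀ r : Q, a * r * b = 0) → a = 0 ∨ b = 0)
    (hcomm : ∀ x y : Q, x * y - y * x = 0) :
    ∀ (k : ℕ) (u : Q), u ^ (k + 1) = 0 → u = 0 := by
  intro k
  induction k with
  | zero => intro u h; simpa using h
  | succ k ih =>
    intro u h
    apply ih
    rcases hp (u ^ (k + 1)) (u ^ (k + 1)) (fun r => by
        have h1 : u ^ (k + 1) * r = r * u ^ (k + 1) :=
          sub_eq_zero.mp (hcomm (u ^ (k + 1)) r)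
        rw [h1, mul_assoc, ← pow_add,
          show k + 1 + (k + 1) = (k + 2) + k from by omega, pow_add, h,
          zero_mul, mul_zero]) with h' | h' <;> exact h'

lemma lnc_map {R S : Type*} [Ring R] [Ring S] (f : R →+* S) (x : R) (l : List R) :
    lnc (f x) (l.map f) = f (lnc x l) := by
  induction l generalizing x with
  | nil => simp [lnc]
  | cons y l ih =>
    simp only [lnc, List.map_cons, List.foldl_cons] at ih ⊢
    rw [show f x * f y - f y * f x = f (x * y - y * x) by simp, ih]

end PrimeRing

theorem prime_radical_eq_nilpotents {R : Type*} [Ring R] (n : ℕ) (hn : 2 ≤ n)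
    (hLn : ∀ (x : R) (l : List R), l.length = n → lnc x l = 0) :
    {u : R | ∀ P : TwoSidedIdeal R,
        (P ≠ ⊤ ∧ ∀ a b : R, (∀ r : R, a * r * b ∈ P) → a ∈ P ∨ b ∈ P) → u ∈ P}
      = {u : R | ∃ k : ℕ, 1 ≤ k ∧ u ^ k = 0} := by
  ext u
  simp only [Set.mem_setOf_eq]
  constructor
  · -- u in every prime ideal ⇒ u nilpotent
    intro hu
    by_contra hnil
    push_neg at hnil
    set S : Set (TwoSidedIdeal R) := {I | ∀ k : ℕ, 1 ≤ k → u ^ k ∉ I} with hS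
    have hbot : (⊥ : TwoSidedIdeal R) ∈ S := by
      intro k hk hmem
      exact hnil k hk hmem
    obtain ⟨P, -, hPS, hPmax⟩ := zorn_le_nonempty₀ S (fun c hcS hchain y₀ hy₀ => by
      classical
      refine ⟨TwoSidedIdeal.mk' (⋃ I ∈ c, (I : Set R))
        (Set.mem_biUnion hy₀ y₀.zero_mem)
        (fun {p q} hp hq => ?_) (fun {p} hp => ?_)
        (fun {p q} hq => ?_) (fun {p q} hp => ?_), ?_, ?_⟩
      · obtain ⟨I, hI, hpI⟩ := Set.mem_iUnion₂.mp hp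
        obtain ⟨J, hJ, hqJ⟩ := Set.mem_iUnion₂.mp hq
        rcases hchain.total hI hJ with h | h
        · exact Set.mem_biUnion hJ (J.add_mem (h hpI) hqJ)
        · exact Set.mem_biUnion hI (I.add_mem hpI (h hqJ))
      · obtain ⟨I, hI, hpI⟩ := Set.mem_iUnion₂.mp hp
        exact Set.mem_biUnion hI (I.neg_mem hpI)
      · obtain ⟨I, hI, hqI⟩ := Set.mem_iUnion₂.mp hq
        exact Set.mem_biUnion hI (I.mul_mem_left _ _ hqI)
      · obtain ⟨I, hI, hpI⟩ := Set.mem_iUnion₂.mp hp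
        exact Set.mem_biUnion hI (I.mul_mem_right _ _ hpI)
      · intro k hk hmem
        rw [TwoSidedIdeal.mem_mk'] at hmem
        obtain ⟨I, hI, hkI⟩ := Set.mem_iUnion₂.mp hmem
        exact hcS hI k hk hkI
      · intro z hz
        rw [TwoSidedIdeal.le_iff, TwoSidedIdeal.coe_mk']
        exact fun t ht => Set.mem_biUnion hz ht) ⊥ hbot
    have huP : u ∉ P := fun h => hPS 1 le_rfl (by simpa using h)
    -- helper: adjoining any element outside P captures a power of u
    have key : ∀ v : R, v ∉ P → ∃ k : ℕ, 1 ≤ k ∧ u ^ k ∈ P ⊔ TwoSidedIdeal.span {v} := by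
      intro v hv
      by_contra hcon
      push_neg at hcon
      have hJS : P ⊔ TwoSidedIdeal.span {v} ∈ S := fun k hk => hcon k hk
      have hle := hPmax hJS le_sup_left
      exact hv (hle (TwoSidedIdeal.mem_sup_right (TwoSidedIdeal.subset_span rfl)))
    refine huP (hu P ⟨?_, ?_⟩)
    · intro htop
      exact hPS 1 le_rfl (htop ▸ trivial)
    · intro a b hab
      by_contra hcon
      push_neg at hcon
      obtain ⟨ha, hb⟩ := hcon
      obtain ⟨j, hj, hja⟩ := key a ha
      obtain ⟨m, hm, hmb⟩ := key b hb
      obtain ⟨p, hpP, x, hx, hpx⟩ := TwoSidedIdeal.mem_sup.mp hja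
      obtain ⟨q, hqP, y, hy, hqy⟩ := TwoSidedIdeal.mem_sup.mp hmb
      -- every element of span {b} is absorbed: a * r * w ∈ P
      have hUb : ∀ w ∈ TwoSidedIdeal.span {b}, ∀ r : R, a * r * w ∈ P := by
        intro w hw
        have := (TwoSidedIdeal.mem_span_iff.mp hw)
          (TwoSidedIdeal.mk' {t : R | ∀ r : R, a * r * t ∈ P}
            (by intro r; simpa using P.zero_mem)
            (fun {s t} hs ht r => by rw [mul_add]; exact P.add_mem (hs r) (ht r))
            (fun {s} hs r => by rw [mul_neg]; exact P.neg_mem (hs r))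
            (fun {s t} ht r => by
              rw [show a * r * (s * t) = a * (r * s) * t by noncomm_ring]
              exact ht (r * s))
            (fun {s t} hs r => by
              rw [show a * r * (s * t) = (a * r * s) * t by noncomm_ring]
              exact P.mul_mem_right _ _ (hs r)))
          (by intro s hs; rw [Set.mem_singleton_iff] at hs; subst hs
              rw [TwoSidedIdeal.coe_mk']; exact hab)
        rwa [TwoSidedIdeal.mem_mk'] at this
      have hxy : x * y ∈ P := by
        have := (TwoSidedIdeal.mem_span_iff.mp hx)
          (TwoSidedIdeal.mk' {t : R | ∀ w ∈ TwoSidedIdeal.span {b}, t * w ∈ P}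
            (by intro w hw; simpa using P.zero_mem)
            (fun {s t} hs ht w hw => by rw [add_mul]; exact P.add_mem (hs w hw) (ht w hw))
            (fun {s} hs w hw => by rw [neg_mul]; exact P.neg_mem (hs w hw))
            (fun {s t} ht w hw => by
              rw [mul_assoc]; exact P.mul_mem_left _ _ (ht w hw))
            (fun {s t} hs w hw => by
              rw [mul_assoc]
              exact hs (t * w) ((TwoSidedIdeal.span {b}).mul_mem_left _ _ hw)))
          (by intro s hs; rw [Set.mem_singleton_iff] at hs; subst hs
              rw [TwoSidedIdeal.coe_mk']
              intro w hw
              simpa using hUb w hw 1)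
        rw [TwoSidedIdeal.mem_mk'] at this
        exact this y hy
      have hpow : u ^ (j + m) ∈ P := by
        rw [pow_add, ← hpx, ← hqy,
          show (p + x) * (q + y) = p * q + p * y + (x * q + x * y) by noncomm_ring]
        exact P.add_mem (P.add_mem (P.mul_mem_right _ _ hpP) (P.mul_mem_right _ _ hpP))
          (P.add_mem (P.mul_mem_left _ _ hqP) hxy)
      exact hPS (j + m) (by omega) hpow

  · -- u nilpotent ⇒ u in every prime ideal
    rintro ⟨k, hk, hku⟩ P ⟨hPne, hPprime⟩
    set Q := P.ringCon.Quotient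
    set f : R →+* Q := P.ringCon.mk' with hf
    have hmem : ∀ x : R, x ∈ P ↔ f x = 0 := by
      intro x
      rw [TwoSidedIdeal.mem_iff]
      constructor
      · intro h
        exact P.ringCon.eq.mpr h
      · intro h
        exact P.ringCon.eq.mp h
    have hsurj : Function.Surjective f := Quotient.mk''_surjective
    have hp : ∀ A B : Q, (∀ X : Q, A * X * B = 0) → A = 0 ∨ B = 0 := by
      intro A B hAB
      obtain ⟨a, rfl⟩ := hsurj A
      obtain ⟨b, rfl⟩ := hsurj B
      rcases hPprime a b (fun r => by
          rw [hmem]; simpa using hAB (f r)) with h | h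
      · exact Or.inl ((hmem a).mp h)
      · exact Or.inr ((hmem b).mp h)
    have hLQ : ∀ (X : Q) (l : List Q), l.length = n → lnc X l = 0 := by
      intro X l hl
      obtain ⟨x, rfl⟩ := hsurj X
      obtain ⟨l₀, rfl⟩ : ∃ l₀ : List R, l₀.map f = l := by
        clear hl
        induction l with
        | nil => exact ⟨[], rfl⟩
        | cons Y l ih =>
          obtain ⟨l₀, rfl⟩ := ih
          obtain ⟨y, rfl⟩ := hsurj Y
          exact ⟨y :: l₀, rfl⟩
      rw [lnc_map, hLn x l₀ (by simpa using hl), map_zero]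
    have hcomm := comm_of_prime_lnc hp n (by omega) hLQ
    have := reduced_of_prime_comm hp hcomm (k - 1) (f u)
      (by rw [show k - 1 + 1 = k from by omega, ← map_pow, hku, map_zero])
    exact (hmem u).mpr this
end
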